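/- arXiv:1001.5227 — 3 statements merged into one kernel-verified Lean document; each statement's English description precedes it below -/
import Mathlib

section
/- Let Δt := (t+σ)(cosh ρ − 1) − τ + sinh ρ · √((t+σ)² + ν²). Then the separation vector n(Δt) between the emission event g(t) and the return event is lightlike: η(n(Δt), n(Δt)) = 0. In other words, Δt is the return time of the returning lightray associated with the holonomy (v, a): a lightray emitted by the observer at eigentime t reaches the image of the observer's worldline under the holonomy after eigentime Δt. -/
/-!
Lorentz transformations preserve η, so `y = v x` is again a unit timelike vector with
`η(x, y) = -cosh ρ`, and `x ∧ y` is η-orthogonal to `x` and `y` with `η(x∧y, x∧y) = sinh² ρ`.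
In the frame `(y, x, x ∧ y)` the separation vector is `n(Δ) = A y - B x + ν (x ∧ y)` with
`A = t + Δ + σ + τ`, `B = t + σ`, so `η(n, n) = -A² + 2AB cosh ρ - B² + ν² sinh² ρ`. This
quadratic in `A` has discriminant `sinh² ρ (B² + ν²)`, and the given `Δt` makes `A` its root
`B cosh ρ + sinh ρ √(B² + ν²)`.
-/

open Matrix Real

noncomputable section

/-- The Minkowski inner product on ℝ³, of signature (−,+,+). -/
def eta (x y : Fin 3 → ℝ) : ℝ := -(x 0 * y 0) + x 1 * y 1 + x 2 * y 2

/-- The Minkowski metric as a 3×3 matrix, η = diag(−1,1,1). -/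
def etaMat : Matrix (Fin 3) (Fin 3) ℝ := Matrix.diagonal ![(-1 : ℝ), 1, 1]

/-- Membership in the proper orthochronous Lorentz group SO⁺(2,1):
vᵀηv = η, det v = 1, v₀₀ > 0. -/
def IsPOLorentz (v : Matrix (Fin 3) (Fin 3) ℝ) : Prop :=
  vᵀ * etaMat * v = etaMat ∧ v.det = 1 ∧ 0 < v 0 0

/-- The Minkowski cross product x∧y, the unique vector with
η(x∧y, z) = det(x,y,z) for all z. -/
def mcross (x y : Fin 3 → ℝ) : Fin 3 → ℝ :=
  ![-(x 1 * y 2 - x 2 * y 1), x 2 * y 0 - x 0 * y 2, x 0 * y 1 - x 1 * y 0]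

theorem eta_eq_dotProduct (x y : Fin 3 → ℝ) : eta x y = x ⬝ᵥ etaMat *ᵥ y := by
  simp [eta, etaMat, dotProduct, Fin.sum_univ_three, mulVec_diagonal]

theorem eta_mulVec_mulVec {v : Matrix (Fin 3) (Fin 3) ℝ} (hv : vᵀ * etaMat * v = etaMat)
    (x y : Fin 3 → ℝ) : eta (v *ᵥ x) (v *ᵥ y) = eta x y := by
  rw [eta_eq_dotProduct, eta_eq_dotProduct, mulVec_mulVec, dotProduct_mulVec,
    ← vecMul_transpose, vecMul_vecMul, ← Matrix.mul_assoc, hv, ← dotProduct_mulVec]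

theorem eta_mcross_self (x y : Fin 3 → ℝ) :
    eta (mcross x y) (mcross x y) = eta x y ^ 2 - eta x x * eta y y := by
  simp only [eta, mcross, Matrix.cons_val]
  ring

theorem eta_smul_sub_smul_add_smul_mcross_self (x y : Fin 3 → ℝ) (A B C : ℝ) :
    eta (A • y - B • x + C • mcross x y) (A • y - B • x + C • mcross x y)
      = A ^ 2 * eta y y + B ^ 2 * eta x x - 2 * A * B * eta x y
        + C ^ 2 * eta (mcross x y) (mcross x y) := by
  simp only [eta, mcross, Pi.add_apply, Pi.sub_apply, Pi.smul_apply, smul_eq_mul,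
    Matrix.cons_val]
  ring

theorem neg_sq_add_two_mul_mul_cosh_sub_sq_add_sq_mul_sinh_sq_eq_zero {A B : ℝ} (ν ρ : ℝ)
    (hA : A = B * cosh ρ + sinh ρ * √(B ^ 2 + ν ^ 2)) :
    -A ^ 2 + 2 * A * B * cosh ρ - B ^ 2 + ν ^ 2 * sinh ρ ^ 2 = 0 := by
  subst hA
  have hR : √(B ^ 2 + ν ^ 2) ^ 2 = B ^ 2 + ν ^ 2 := sq_sqrt (by positivity)
  linear_combination B ^ 2 * cosh_sq_sub_sinh_sq ρ - sinh ρ ^ 2 * hR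

theorem return_time_is_lightlike_general
    (x x₀ a : Fin 3 → ℝ) (v : Matrix (Fin 3) (Fin 3) ℝ)
    (hx : eta x x = -1)
    (hv : IsPOLorentz v)
    (ρ σ τ ν t : ℝ)
    (hcosh : Real.cosh ρ = -eta x (v.mulVec x))
    (hdec : v.mulVec x₀ + a - x₀
      = σ • (v.mulVec x - x) + τ • v.mulVec x + ν • mcross x (v.mulVec x))
    (n : ℝ → Fin 3 → ℝ)
    (hn : ∀ Δ, n Δ = (t + Δ) • v.mulVec x - t • x + (v.mulVec x₀ + a - x₀))
    (Δt : ℝ)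
    (hΔt : Δt = (t + σ) * (Real.cosh ρ - 1) - τ
      + Real.sinh ρ * Real.sqrt ((t + σ) ^ 2 + ν ^ 2)) :
    eta (n Δt) (n Δt) = 0 := by
  set y := v *ᵥ x
  have hyy : eta y y = -1 := (eta_mulVec_mulVec hv.1 x x).trans hx
  have hsep : n Δt = (t + Δt + σ + τ) • y - (t + σ) • x + ν • mcross x y := by
    rw [hn, hdec]
    module
  have hxy : eta x y = -cosh ρ := by rw [hcosh, neg_neg]
  rw [hsep, eta_smul_sub_smul_add_smul_mcross_self, eta_mcross_self, hx, hyy, hxy]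
  linear_combination
    neg_sq_add_two_mul_mul_cosh_sub_sq_add_sq_mul_sinh_sq_eq_zero
        (A := t + Δt + σ + τ) (B := t + σ) ν ρ (by rw [hΔt]; ring)
      + ν ^ 2 * cosh_sq_sub_sinh_sq ρ

/-- the separation vector n(Δt) with
Δt = (t+σ)(cosh ρ − 1) − τ + sinh ρ·√((t+σ)² + ν²) is lightlike. -/
theorem return_time_is_lightlike
    (x x₀ a : Fin 3 → ℝ) (v : Matrix (Fin 3) (Fin 3) ℝ)
    (hx : eta x x = -1) (hxfut : 0 < x 0)
    (hv : IsPOLorentz v) (hvx : v.mulVec x ≠ x)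
    (ρ σ τ ν t : ℝ) (hρ : 0 < ρ)
    (hcosh : Real.cosh ρ = -eta x (v.mulVec x))
    (hdec : v.mulVec x₀ + a - x₀
      = σ • (v.mulVec x - x) + τ • v.mulVec x + ν • mcross x (v.mulVec x))
    (n : ℝ → Fin 3 → ℝ)
    (hn : ∀ Δ, n Δ = (t + Δ) • v.mulVec x - t • x + (v.mulVec x₀ + a - x₀))
    (Δt : ℝ)
    (hΔt : Δt = (t + σ) * (Real.cosh ρ - 1) - τ
      + Real.sinh ρ * Real.sqrt ((t + σ) ^ 2 + ν ^ 2)) :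
    eta (n Δt) (n Δt) = 0 :=
  return_time_is_lightlike_general x x₀ a v hx hv ρ σ τ ν t hcosh hdec n hn Δt hΔt
end
end

section
/- Let ρ > 0, σ, ν, t ∈ ℝ with t + σ ≥ 0 and (t+σ)² + ν² > 0. Then the relative frequency of the returning lightray satisfies the strict redshift inequality: √((t+σ)² + ν²) / ( cosh ρ · √((t+σ)² + ν²) + sinh ρ · (t+σ) ) < 1. -/
theorem div_mul_add_lt_one {α : Type*} [Field α] [LinearOrder α] [IsStrictOrderedRing α]
    {s c b : α} (hs : 0 < s) (hc : 1 < c) (hb : 0 ≤ b) : s / (c * s + b) < 1 := by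
  have hlt : s < c * s + b := lt_add_of_lt_of_nonneg (lt_mul_of_one_lt_left hs hc) hb
  exact (div_lt_one (hs.trans hlt)).2 hlt

/-- the strict redshift inequality f_r/f_e < 1. -/
theorem redshift_inequality
    (ρ σ ν t : ℝ) (hρ : 0 < ρ) (hts : 0 ≤ t + σ)
    (hpos : 0 < (t + σ) ^ 2 + ν ^ 2) :
    Real.sqrt ((t + σ) ^ 2 + ν ^ 2)
      / (Real.cosh ρ * Real.sqrt ((t + σ) ^ 2 + ν ^ 2)
          + Real.sinh ρ * (t + σ)) < 1 :=
  div_mul_add_lt_one (Real.sqrt_pos.2 hpos) (Real.one_lt_cosh.2 hρ.ne')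
    (mul_nonneg (Real.sinh_pos_iff.2 hρ).le hts)
end

section
/- In the conformally static case σ = τ = ν = 0, the measurements associated with the returning lightray do not vary with the emission time t > 0: the relative frequency equals √((t+σ)² + ν²) / ( cosh ρ·√((t+σ)² + ν²) + sinh ρ·(t+σ) ) = e^{−ρ} for all t > 0, and the emission angle φ determined by tan φ = ν/( sinh ρ·√((t+σ)² + ν²) ) vanishes for all t > 0, so the direction of emission P(v·x)/‖P(v·x)‖ is independent of t. -/
open Real

lemma self_div_cosh_mul_add_sinh_mul (ρ : ℝ) {t : ℝ} (ht : t ≠ 0) :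
    t / (cosh ρ * t + sinh ρ * t) = exp (-ρ) := by
  rw [← add_mul, cosh_add_sinh, exp_neg, div_mul_cancel_right₀ ht]

theorem measurements_conformally_static_general
    (ρ σ ν : ℝ) (hσ : σ = 0) (hν : ν = 0) :
    ∀ t : ℝ, 0 < t →
      Real.sqrt ((t + σ) ^ 2 + ν ^ 2)
          / (Real.cosh ρ * Real.sqrt ((t + σ) ^ 2 + ν ^ 2)
              + Real.sinh ρ * (t + σ))
        = Real.exp (-ρ) ∧
      Real.arctan (ν / (Real.sinh ρ * Real.sqrt ((t + σ) ^ 2 + ν ^ 2))) = 0 := by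
  subst hσ hν
  intro t ht
  have hsqrt : √((t + 0) ^ 2 + 0 ^ 2) = t := by simp [sqrt_sq ht.le]
  refine ⟨?_, by simp⟩
  rw [hsqrt, add_zero, self_div_cosh_mul_add_sinh_mul ρ ht.ne']

/-- in the conformally static case σ = τ = ν = 0 the
measurements do not vary with the emission time: the relative frequency
equals e^{−ρ} and the emission angle φ (with tan φ = ν/(sinh ρ·√((t+σ)²+ν²)),
φ ∈ (−π/2, π/2), i.e. φ = arctan(...)) vanishes for all t > 0. -/
theorem measurements_conformally_static
    (ρ σ τ ν : ℝ) (hρ : 0 < ρ) (hσ : σ = 0) (hτ : τ = 0) (hν : ν = 0) :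
    ∀ t : ℝ, 0 < t →
      Real.sqrt ((t + σ) ^ 2 + ν ^ 2)
          / (Real.cosh ρ * Real.sqrt ((t + σ) ^ 2 + ν ^ 2)
              + Real.sinh ρ * (t + σ))
        = Real.exp (-ρ) ∧
      Real.arctan (ν / (Real.sinh ρ * Real.sqrt ((t + σ) ^ 2 + ν ^ 2))) = 0 :=
  measurements_conformally_static_general ρ σ ν hσ hν
end
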